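/- arXiv:2605.09813 — 6 statements merged into one kernel-verified Lean document; each statement's English description precedes it below -/
import Mathlib

section
/- Let N ≥ 1 be a natural number and C₁, C₂, C₃ ≥ 0 real constants. Suppose A : ℕ → Fin N → ℝ satisfies A(0, n) = 0 for every n, and for every r ≥ 1 and every n, A(r, n) ≤ r · ∑_{y=0}^{r−1} ( C₁ + C₂ · ∑_{j ∈ Fin N} A(y, j) + C₃ ). Then for every r and every n, A(r, n) ≤ (C₁ + C₃) · ∑_{y=0}^{r−1} (r choose y) · r^r · (C₂·N)^y. -/
/-!
With `D = C₂ * N`, the binomial theorem puts the bound in the closed form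
`(C₁ + C₃) * r ^ r * ((1 + D) ^ r - D ^ r)`. Strong induction on `r` then works because, after
bounding `y ^ y ≤ r ^ (r - 1)` for `y < r`, the recursion is controlled by the telescoping identity
`D * ∑_{y<r} ((1 + D) ^ y - D ^ y) + ∑_{y<r} D ^ y = (1 + D) ^ r - D ^ r`, whose geometric sum is
at least `1`, and by `r * r ≤ r ^ r`.
-/

open Finset

theorem Nat.pow_self_le_pow_pred_of_lt {y r : ℕ} (h : y < r) : y ^ y ≤ r ^ (r - 1) := by
  rcases y.eq_zero_or_pos with rfl | hy
  · exact Nat.one_le_pow _ _ (by omega)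
  · calc y ^ y ≤ y ^ (r - 1) := Nat.pow_le_pow_right hy (by omega)
      _ ≤ r ^ (r - 1) := Nat.pow_le_pow_left h.le _

theorem Nat.mul_self_le_pow_self (r : ℕ) : r * r ≤ r ^ r := by
  rcases Nat.lt_or_ge r 2 with hr | hr
  · interval_cases r <;> norm_num
  · simpa [sq] using Nat.pow_le_pow_right (by omega : 0 < r) hr

section BinomialSums

variable {R : Type*} [CommRing R]

theorem sum_range_choose_mul_pow (x : R) (r : ℕ) :
    ∑ y ∈ range r, (r.choose y : R) * x ^ y = (1 + x) ^ r - x ^ r := by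
  rw [add_comm, add_pow, sum_range_succ]
  simp [mul_comm]

theorem mul_sum_range_add_pow_sub_pow_add_geom_sum (x : R) (r : ℕ) :
    x * ∑ y ∈ range r, ((1 + x) ^ y - x ^ y) + ∑ y ∈ range r, x ^ y = (1 + x) ^ r - x ^ r := by
  induction r with
  | zero => simp
  | succ r ih => rw [sum_range_succ, sum_range_succ]; linear_combination ih

variable [LinearOrder R] [IsStrictOrderedRing R]

theorem mul_sum_range_add_pow_sub_pow_le {x : R} (hx : 0 ≤ x) {r : ℕ} (hr : r ≠ 0) :
    x * ∑ y ∈ range r, ((1 + x) ^ y - x ^ y) ≤ (1 + x) ^ r - x ^ r - 1 := by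
  have h1 : 1 ≤ ∑ y ∈ range r, x ^ y := by
    simpa using single_le_sum (fun y _ ↦ pow_nonneg hx y) (mem_range.mpr (Nat.pos_of_ne_zero hr))
  linarith [mul_sum_range_add_pow_sub_pow_add_geom_sum x r]

end BinomialSums

def gapBound (D : ℝ) (r : ℕ) : ℝ := (r : ℝ) ^ r * ((1 + D) ^ r - D ^ r)

theorem gapBound_eq_sum (D : ℝ) (r : ℕ) :
    gapBound D r = ∑ y ∈ range r, (r.choose y : ℝ) * (r : ℝ) ^ r * D ^ y := by
  simp_rw [gapBound, ← sum_range_choose_mul_pow, mul_sum]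
  exact sum_congr rfl fun y _ ↦ by ring

theorem cast_mul_sum_one_add_mul_gapBound_le {D : ℝ} (hD : 0 ≤ D) {r : ℕ} (hr : r ≠ 0) :
    (r : ℝ) * ∑ y ∈ range r, (1 + D * gapBound D y) ≤ gapBound D r := by
  have hgap : ∀ y ∈ range r, gapBound D y ≤ (r : ℝ) ^ (r - 1) * ((1 + D) ^ y - D ^ y) := by
    intro y hy
    have hS : D ^ y ≤ (1 + D) ^ y := pow_le_pow_left₀ hD (by linarith) y
    have hpow : (y : ℝ) ^ y ≤ (r : ℝ) ^ (r - 1) := by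
      exact_mod_cast Nat.pow_self_le_pow_pred_of_lt (mem_range.mp hy)
    exact mul_le_mul_of_nonneg_right hpow (sub_nonneg.mpr hS)
  have hsq : (r : ℝ) * r ≤ (r : ℝ) ^ r := by exact_mod_cast Nat.mul_self_le_pow_self r
  calc (r : ℝ) * ∑ y ∈ range r, (1 + D * gapBound D y)
      ≤ r * ∑ y ∈ range r, (1 + D * ((r : ℝ) ^ (r - 1) * ((1 + D) ^ y - D ^ y))) := by
        gcongr with y hy
        exact hgap y hy
    _ = r * r + r * (r : ℝ) ^ (r - 1) * (D * ∑ y ∈ range r, ((1 + D) ^ y - D ^ y)) := by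
        rw [sum_add_distrib, sum_const, card_range, nsmul_one, ← mul_sum, ← mul_sum]
        ring
    _ ≤ (r : ℝ) ^ r + (r : ℝ) ^ r * ((1 + D) ^ r - D ^ r - 1) := by
        rw [mul_pow_sub_one hr]
        gcongr
        exact mul_sum_range_add_pow_sub_pow_le hD hr
    _ = gapBound D r := by rw [gapBound]; ring

theorem stmt_3_general (N : ℕ) (C₁ C₂ C₃ : ℝ)
    (hC₁ : 0 ≤ C₁) (hC₂ : 0 ≤ C₂) (hC₃ : 0 ≤ C₃)
    (A : ℕ → Fin N → ℝ) (h0 : ∀ n, A 0 n = 0)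
    (hrec : ∀ r, 1 ≤ r → ∀ n, A r n ≤
      (r : ℝ) * ∑ y ∈ Finset.range r, (C₁ + C₂ * ∑ j : Fin N, A y j + C₃)) :
    ∀ r n, A r n ≤
      (C₁ + C₃) * ∑ y ∈ Finset.range r,
        (r.choose y : ℝ) * (r : ℝ) ^ r * (C₂ * N) ^ y := by
  simp_rw [← gapBound_eq_sum]
  intro r
  induction r using Nat.strong_induction_on with
  | _ r ih =>
    intro n
    rcases Nat.eq_zero_or_pos r with rfl | hr
    · simp [h0, gapBound]
    calc A r n ≤ r * ∑ y ∈ range r, (C₁ + C₂ * ∑ j : Fin N, A y j + C₃) := hrec r hr n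
      _ ≤ r * ∑ y ∈ range r, (C₁ + C₂ * ∑ _j : Fin N, (C₁ + C₃) * gapBound (C₂ * N) y + C₃) := by
        gcongr with y hy j
        exact ih y (mem_range.mp hy) j
      _ = (C₁ + C₃) * (r * ∑ y ∈ range r, (1 + C₂ * N * gapBound (C₂ * N) y)) := by
        simp only [sum_const, card_univ, Fintype.card_fin, nsmul_eq_mul, mul_sum]
        exact sum_congr rfl fun y _ ↦ by ring
      _ ≤ (C₁ + C₃) * gapBound (C₂ * N) r := by
        gcongr
        exact cast_mul_sum_one_add_mul_gapBound_le (by positivity) hr.ne'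

/-- Combinatorial recursion bound from Proposition 1: if `A 0 n = 0` and
`A r n ≤ r · ∑_{y<r} (C₁ + C₂ · ∑_j A y j + C₃)` for `r ≥ 1`, then
`A r n ≤ (C₁+C₃) · ∑_{y<r} (r choose y) · r^r · (C₂·N)^y`. -/
theorem stmt_3 (N : ℕ) (hN : 1 ≤ N) (C₁ C₂ C₃ : ℝ)
    (hC₁ : 0 ≤ C₁) (hC₂ : 0 ≤ C₂) (hC₃ : 0 ≤ C₃)
    (A : ℕ → Fin N → ℝ) (h0 : ∀ n, A 0 n = 0)
    (hrec : ∀ r, 1 ≤ r → ∀ n, A r n ≤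
      (r : ℝ) * ∑ y ∈ Finset.range r, (C₁ + C₂ * ∑ j : Fin N, A y j + C₃)) :
    ∀ r n, A r n ≤
      (C₁ + C₃) * ∑ y ∈ Finset.range r,
        (r.choose y : ℝ) * (r : ℝ) ^ r * (C₂ * N) ^ y :=
  stmt_3_general N C₁ C₂ C₃ hC₁ hC₂ hC₃ A h0 hrec
end

section
/- Let V be a real vector space (a module over ℝ), ρ ∈ ℝ with ρ ≠ 1, η ∈ ℝ, and g : ℕ → V. Define u : ℕ → V by u(0) = 0 and u(t+1) = ρ • u(t) + g(t), and let θ : ℕ → V satisfy θ(t+1) = θ(t) − η • u(t+1) for all t (with θ(0) arbitrary). Then for every τ ∈ ℕ: θ(τ) = θ(0) − η • ∑_{q=0}^{τ−1} ((1 − ρ^{τ−q})/(1 − ρ)) • g(q). -/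
/-- SGD with momentum equals plain SGD with scaling coefficients
`w_q = (1 - ρ^(τ-q)) / (1 - ρ)`. -/
theorem stmt_5 {V : Type*} [AddCommGroup V] [Module ℝ V] (ρ : ℝ) (hρ : ρ ≠ 1)
    (η : ℝ) (g : ℕ → V) (u θ : ℕ → V)
    (hu0 : u 0 = 0) (hu : ∀ t, u (t + 1) = ρ • u t + g t)
    (hθ : ∀ t, θ (t + 1) = θ t - η • u (t + 1)) :
    ∀ τ : ℕ, θ τ = θ 0 - η • ∑ q ∈ Finset.range τ,
      ((1 - ρ ^ (τ - q)) / (1 - ρ)) • g q := by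
  have hρ' : 1 - ρ ≠ 0 := sub_ne_zero.mpr (fun h => hρ h.symm)
  have huf : ∀ t, u t = ∑ q ∈ Finset.range t, ρ ^ (t - 1 - q) • g q := by
    intro t
    induction t with
    | zero => simpa using hu0
    | succ t ih =>
      rw [hu t, ih, Finset.smul_sum, Finset.sum_range_succ]
      congr 1
      · apply Finset.sum_congr rfl
        intro q hq
        rw [smul_smul, ← pow_succ']
        have hqt := Finset.mem_range.mp hq
        have he : t - 1 - q + 1 = t + 1 - 1 - q := by omega
        rw [he]
      · simp
  intro τ
  induction τ with
  | zero => simp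
  | succ τ ih =>
    rw [hθ τ, ih, huf (τ + 1)]
    rw [sub_sub, ← smul_add, Finset.sum_range_succ, Finset.sum_range_succ]
    congr 2
    rw [← add_assoc, ← Finset.sum_add_distrib]
    congr 1
    · apply Finset.sum_congr rfl
      intro q hq
      have hq' := Finset.mem_range.mp hq
      rw [← add_smul]
      congr 1
      have h1 : τ + 1 - q = (τ - q) + 1 := by omega
      have h2 : τ + 1 - 1 - q = τ - q := by omega
      rw [h1, h2]
      field_simp
      ring
    · have h1 : τ + 1 - τ = 1 := by omega
      have h2 : τ + 1 - 1 - τ = 0 := by omega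
      rw [h1, h2, pow_one, pow_zero, one_smul, div_self hρ', one_smul]
end

section
/- Let ρ be a real number with 0 < ρ < 1 and ρ·log(ρ) + (1 − ρ)/2 > 0 (this condition is equivalent to ρ < exp(W₋₁(−1/(2√e)) + 1/2), where W₋₁ is the lower branch of the Lambert W function). Then for every real τ > 0: ρ^(τ+1) + τ/2 − ρ − τ·ρ/2 > 0, where ρ^(τ+1) denotes the real power exp((τ+1)·log ρ). -/
/-- For `0 < ρ < 1` with `ρ·log ρ + (1-ρ)/2 > 0`, the function
`h(τ) = ρ^(τ+1) + τ/2 - ρ - τρ/2` is positive for all `τ > 0` (real powers). -/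
theorem stmt_7 (ρ : ℝ) (hρ0 : 0 < ρ) (hρ1 : ρ < 1)
    (hcond : ρ * Real.log ρ + (1 - ρ) / 2 > 0) :
    ∀ τ : ℝ, 0 < τ → ρ ^ (τ + 1) + τ / 2 - ρ - τ * ρ / 2 > 0 := by
  intro τ hτ
  have hlog : Real.log ρ < 0 := Real.log_neg hρ0 hρ1
  have hx : τ * Real.log ρ ≠ 0 := ne_of_lt (mul_neg_of_pos_of_neg hτ hlog)
  have hexp : τ * Real.log ρ + 1 < Real.exp (τ * Real.log ρ) :=
    Real.add_one_lt_exp hx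
  have hrw : ρ ^ (τ + 1) = ρ * Real.exp (τ * Real.log ρ) := by
    rw [Real.rpow_add hρ0, Real.rpow_one, Real.rpow_def_of_pos hρ0]
    ring
  have h1 : ρ * (τ * Real.log ρ + 1) < ρ * Real.exp (τ * Real.log ρ) :=
    (mul_lt_mul_iff_right₀ hρ0).mpr hexp
  have h2 : 0 < τ * (ρ * Real.log ρ + (1 - ρ) / 2) := mul_pos hτ hcond
  rw [hrw]
  nlinarith [h1, h2]
end

section
/- Let ρ be a real number with 0 < ρ < 1 and ρ·log(ρ) + (1 − ρ)/2 > 0. Then the function h : ℝ → ℝ defined by h(τ) = ρ^(τ+1) + τ/2 − ρ − τ·ρ/2 (real powers) is strictly monotone increasing on [0, ∞). -/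
/-! The derivative `h'(τ) = ρ ^ (τ + 1) log ρ + (1 - ρ) / 2` satisfies
`h'(τ) - h'(0) = ρ log ρ (ρ ^ τ - 1) ≥ 0`, since `log ρ` and `ρ ^ τ - 1` have the same sign
for `τ ≥ 0`; hence `h' ≥ h'(0) > 0` on `[0, ∞)`. -/

open Real

lemma Real.log_mul_rpow_sub_one_nonneg {x τ : ℝ} (hx : 0 < x) (hτ : 0 ≤ τ) :
    0 ≤ log x * (x ^ τ - 1) := by
  rcases le_total 1 x with h1x | hx1
  · exact mul_nonneg (log_nonneg h1x) (sub_nonneg.2 (one_le_rpow h1x hτ))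
  · exact mul_nonneg_of_nonpos_of_nonpos (log_nonpos hx.le hx1)
      (sub_nonpos.2 (rpow_le_one hx.le hx1 hτ))

lemma Real.mul_log_le_rpow_add_one_mul_log {x τ : ℝ} (hx : 0 < x) (hτ : 0 ≤ τ) :
    x * log x ≤ x ^ (τ + 1) * log x := by
  have hsign := mul_nonneg hx.le (log_mul_rpow_sub_one_nonneg hx hτ)
  rw [rpow_add_one hx.ne']
  linarith

lemma hasDerivAt_rpow_add_one_add_linear {ρ : ℝ} (hρ : 0 < ρ) (τ : ℝ) :
    HasDerivAt (fun τ : ℝ => ρ ^ (τ + 1) + τ / 2 - ρ - τ * ρ / 2)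
      (ρ ^ (τ + 1) * log ρ + (1 - ρ) / 2) τ := by
  have hpow : HasDerivAt (fun τ : ℝ => ρ ^ (τ + 1)) (ρ ^ (τ + 1) * log ρ) τ :=
    (hasStrictDerivAt_const_rpow hρ (τ + 1)).hasDerivAt.comp_add_const τ 1
  have hhalf : HasDerivAt (fun τ : ℝ => τ / 2) (1 / 2) τ := (hasDerivAt_id τ).div_const 2
  have hscaled : HasDerivAt (fun τ : ℝ => τ * ρ / 2) (1 * ρ / 2) τ :=
    ((hasDerivAt_id τ).mul_const ρ).div_const 2
  exact (((hpow.add hhalf).sub_const ρ).sub hscaled).congr_deriv (by ring)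

theorem stmt_8_general (ρ : ℝ) (hρ0 : 0 < ρ)
    (hcond : ρ * Real.log ρ + (1 - ρ) / 2 > 0) :
    StrictMonoOn (fun τ : ℝ => ρ ^ (τ + 1) + τ / 2 - ρ - τ * ρ / 2)
      (Set.Ici (0 : ℝ)) := by
  have hderiv := hasDerivAt_rpow_add_one_add_linear hρ0
  refine strictMonoOn_of_hasDerivWithinAt_pos (convex_Ici 0)
    (fun τ _ => (hderiv τ).continuousAt.continuousWithinAt)
    (fun τ _ => (hderiv τ).hasDerivWithinAt) fun τ hτ => ?_
  rw [interior_Ici] at hτ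
  linarith [mul_log_le_rpow_add_one_mul_log hρ0 (le_of_lt hτ)]

/-- For `0 < ρ < 1` with `ρ·log ρ + (1-ρ)/2 > 0`, the function
`h(τ) = ρ^(τ+1) + τ/2 - ρ - τρ/2` (real powers) is strictly monotone
increasing on `[0, ∞)`. -/
theorem stmt_8 (ρ : ℝ) (hρ0 : 0 < ρ) (hρ1 : ρ < 1)
    (hcond : ρ * Real.log ρ + (1 - ρ) / 2 > 0) :
    StrictMonoOn (fun τ : ℝ => ρ ^ (τ + 1) + τ / 2 - ρ - τ * ρ / 2)
      (Set.Ici (0 : ℝ)) :=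
  stmt_8_general ρ hρ0 hcond
end

section
/- Let ρ be a real number with 0 < ρ < 1 and ρ·log(ρ) + (1 − ρ)/2 > 0. Then for every integer τ ≥ 1: (1/τ) · ∑_{q=0}^{τ−1} (1 − ρ^{τ−q})/(1 − ρ) > 1/(2·(1 − ρ)). -/
/-- Convergence condition for SGD with momentum: the average scaling coefficient
exceeds half of the maximal coefficient `1/(1-ρ)`. -/
theorem stmt_9 (ρ : ℝ) (hρ0 : 0 < ρ) (hρ1 : ρ < 1)
    (hcond : ρ * Real.log ρ + (1 - ρ) / 2 > 0) :
    ∀ τ : ℕ, 1 ≤ τ →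
      (1 / (τ : ℝ)) * ∑ q ∈ Finset.range τ, (1 - ρ ^ (τ - q)) / (1 - ρ) >
        1 / (2 * (1 - ρ)) := by
  have h1 : (0:ℝ) < 1 - ρ := by linarith
  -- hcond forces ρ < 1/2
  have hhalf : ρ < 1/2 := by
    by_contra h
    push_neg at h
    have hlog : Real.log ρ < ρ - 1 :=
      Real.log_lt_sub_one_of_pos hρ0 (by linarith)
    nlinarith
  intro τ hτ
  have hτR : (0:ℝ) < (τ:ℝ) := by exact_mod_cast Nat.lt_of_lt_of_le Nat.zero_lt_one hτ
  set S : ℝ := ∑ q ∈ Finset.range τ, ρ ^ (τ - q) with hS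
  have hSle : S ≤ (τ:ℝ) * ρ := by
    calc S ≤ ∑ q ∈ Finset.range τ, ρ := by
          apply Finset.sum_le_sum
          intro q hq
          have h1q : 1 ≤ τ - q := by
            have := Finset.mem_range.mp hq
            omega
          calc ρ ^ (τ - q) ≤ ρ ^ 1 :=
                pow_le_pow_of_le_one hρ0.le hρ1.le h1q
            _ = ρ := pow_one ρ
      _ = (τ:ℝ) * ρ := by simp [Finset.sum_const, Finset.card_range]
  have hsum : ∑ q ∈ Finset.range τ, (1 - ρ ^ (τ - q)) / (1 - ρ)
      = ((τ:ℝ) - S) / (1 - ρ) := by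
    rw [← Finset.sum_div, Finset.sum_sub_distrib, Finset.sum_const,
      Finset.card_range, nsmul_eq_mul, mul_one, hS]
  rw [hsum, gt_iff_lt, div_lt_iff₀ (by positivity), one_div]
  have heq : (↑τ:ℝ)⁻¹ * ((↑τ - S) / (1 - ρ)) * (2 * (1 - ρ))
      = 2 * ((τ:ℝ) - S) / τ := by
    field_simp
  rw [heq, lt_div_iff₀ hτR]
  nlinarith
end

section
/- Let H be a real Hilbert space and F : H → ℝ a differentiable function whose gradient ∇F is Lipschitz with constant L ≥ 0. Let Θ ∈ H, τ ∈ ℕ, η ≥ 0, w : ℕ → ℝ with w(q) ≥ 0 for all q, and g : ℕ → H, and set Θ' := Θ − η • ∑_{q=0}^{τ−1} w(q) • g(q). Then F(Θ') − F(Θ) ≤ ∑_{q=0}^{τ−1} η·w(q)·( (1/2)·‖∇F(Θ)‖² + (1/2)·‖g(q) − g(0)‖² − ⟨∇F(Θ), g(0)⟩ ) + (L/2)·τ·∑_{q=0}^{τ−1} (η·w(q))²·‖g(q)‖². -/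
/-!
Apply the descent lemma `F (x + v) ≤ F x + ⟪∇F x, v⟫ + L / 2 * ‖v‖ ^ 2` with
`v = -∑ q, (η * w q) • g q`. In the linear term split `⟪∇F Θ, g q⟫` as
`⟪∇F Θ, g 0⟫ + ⟪∇F Θ, g q - g 0⟫` and bound the second summand by Young's inequality;
in the quadratic term use `‖∑ q < τ, a q‖ ^ 2 ≤ τ * ∑ q < τ, ‖a q‖ ^ 2`.
-/

open scoped RealInnerProductSpace

open Finset Set

section InnerProductSpace

variable {H : Type*} [NormedAddCommGroup H] [InnerProductSpace ℝ H]

theorem neg_inner_le_half_norm_sq_add_half_norm_sq (a b : H) :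
    -⟪a, b⟫ ≤ 1 / 2 * ‖a‖ ^ 2 + 1 / 2 * ‖b‖ ^ 2 := by
  nlinarith [norm_add_sq_real a b, sq_nonneg ‖a + b‖]

theorem neg_inner_sum_smul_le {ι : Type*} (s : Finset ι) (c : ι → ℝ) (hc : ∀ i, 0 ≤ c i)
    (a b : H) (g : ι → H) :
    -⟪a, ∑ i ∈ s, c i • g i⟫ ≤
      ∑ i ∈ s, c i * (1 / 2 * ‖a‖ ^ 2 + 1 / 2 * ‖g i - b‖ ^ 2 - ⟪a, b⟫) := by
  rw [inner_sum, ← sum_neg_distrib]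
  refine sum_le_sum fun i _ => ?_
  have hsplit : ⟪a, g i⟫ = ⟪a, b⟫ + ⟪a, g i - b⟫ := by
    rw [← inner_add_right, add_sub_cancel]
  have hyoung := mul_le_mul_of_nonneg_left
    (neg_inner_le_half_norm_sq_add_half_norm_sq a (g i - b)) (hc i)
  rw [real_inner_smul_right, hsplit]
  linarith

variable [CompleteSpace H]

theorem hasDerivAt_apply_add_smul {F : H → ℝ} {x v : H} {t : ℝ}
    (hF : DifferentiableAt ℝ F (x + t • v)) :
    HasDerivAt (fun s : ℝ => F (x + s • v)) ⟪gradient F (x + t • v), v⟫ t := by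
  have hline : HasDerivAt (fun s : ℝ => x + s • v) v t := by
    simpa using ((hasDerivAt_id t).smul_const v).const_add x
  have hcomp := hF.hasGradientAt.hasFDerivAt.comp_hasDerivAt t hline
  simp only [InnerProductSpace.toDual_apply_apply] at hcomp
  exact hcomp

theorem apply_add_le_of_lipschitz_gradient {F : H → ℝ} (hF : Differentiable ℝ F) {L : ℝ}
    (hLip : ∀ x y : H, ‖gradient F x - gradient F y‖ ≤ L * ‖x - y‖) (x v : H) :
    F (x + v) ≤ F x + ⟪gradient F x, v⟫ + L / 2 * ‖v‖ ^ 2 := by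
  have hB : ∀ t : ℝ, HasDerivAt (fun t => F x + t * ⟪gradient F x, v⟫ + L / 2 * t ^ 2 * ‖v‖ ^ 2)
      (⟪gradient F x, v⟫ + L * t * ‖v‖ ^ 2) t := fun t => by
    refine ((((hasDerivAt_id t).mul_const ⟪gradient F x, v⟫).const_add (F x)).add
      (((hasDerivAt_pow 2 t).const_mul (L / 2)).mul_const (‖v‖ ^ 2))).congr_deriv ?_
    simp only [Nat.cast_ofNat]
    ring
  have bound : ∀ t ∈ Ico (0 : ℝ) 1,
      ⟪gradient F (x + t • v), v⟫ ≤ ⟪gradient F x, v⟫ + L * t * ‖v‖ ^ 2 := by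
    intro t ⟨ht, _⟩
    have hstep : ‖gradient F (x + t • v) - gradient F x‖ ≤ L * t * ‖v‖ := by
      simpa [norm_smul, abs_of_nonneg ht, mul_assoc] using hLip (x + t • v) x
    calc ⟪gradient F (x + t • v), v⟫
        = ⟪gradient F x, v⟫ + ⟪gradient F (x + t • v) - gradient F x, v⟫ := by
          rw [inner_sub_left]; ring
      _ ≤ ⟪gradient F x, v⟫ + ‖gradient F (x + t • v) - gradient F x‖ * ‖v‖ := by
          gcongr; exact real_inner_le_norm _ _
      _ ≤ ⟪gradient F x, v⟫ + L * t * ‖v‖ * ‖v‖ := by gcongr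
      _ = ⟪gradient F x, v⟫ + L * t * ‖v‖ ^ 2 := by ring
  -- compare `t ↦ F (x + t • v)` on `[0, 1]` with its quadratic upper model, through derivatives
  have hcomp := image_le_of_deriv_right_le_deriv_boundary
    (fun t _ => (hasDerivAt_apply_add_smul (hF _)).continuousAt.continuousWithinAt)
    (fun t _ => (hasDerivAt_apply_add_smul (hF _)).hasDerivWithinAt)
    (by simp) (fun t _ => (hB t).continuousAt.continuousWithinAt)
    (fun t _ => (hB t).hasDerivWithinAt) bound (right_mem_Icc.2 zero_le_one)
  simpa using hcomp

end InnerProductSpace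

theorem norm_sum_sq_le_card_mul_sum_norm_sq {ι E : Type*} [SeminormedAddCommGroup E]
    (s : Finset ι) (f : ι → E) : ‖∑ i ∈ s, f i‖ ^ 2 ≤ #s * ∑ i ∈ s, ‖f i‖ ^ 2 :=
  (pow_le_pow_left₀ (norm_nonneg _) (norm_sum_le s f) 2).trans sq_sum_le_card_mul_sum_sq

/-- Per-round descent estimate from the proof of Theorem 1, for one global round of
`τ` local SGD steps with learning rate `η`, scaling coefficients `w q`, and
update directions `g q`. -/
theorem stmt_17 {H : Type*} [NormedAddCommGroup H] [InnerProductSpace ℝ H]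
    [CompleteSpace H]
    (F : H → ℝ) (hF : Differentiable ℝ F) (L : ℝ) (hL : 0 ≤ L)
    (hLip : ∀ x y : H, ‖gradient F x - gradient F y‖ ≤ L * ‖x - y‖)
    (Θ : H) (τ : ℕ) (η : ℝ) (hη : 0 ≤ η) (w : ℕ → ℝ) (hw : ∀ q, 0 ≤ w q)
    (g : ℕ → H) (Θ' : H)
    (hΘ' : Θ' = Θ - η • ∑ q ∈ Finset.range τ, w q • g q) :
    F Θ' - F Θ ≤
      (∑ q ∈ Finset.range τ, η * w q *
        ((1 / 2) * ‖gradient F Θ‖ ^ 2 + (1 / 2) * ‖g q - g 0‖ ^ 2 -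
          ⟪gradient F Θ, g 0⟫)) +
      (L / 2) * τ * ∑ q ∈ Finset.range τ, (η * w q) ^ 2 * ‖g q‖ ^ 2 := by
  set d : H := ∑ q ∈ range τ, (η * w q) • g q
  have hΘ'd : Θ' = Θ + -d := by
    simp only [hΘ', d, smul_sum, smul_smul, sub_eq_add_neg]
  have hdescent := apply_add_le_of_lipschitz_gradient hF hLip Θ (-d)
  rw [← hΘ'd, inner_neg_right, norm_neg] at hdescent
  have hinner := neg_inner_sum_smul_le (range τ) (fun q => η * w q)
    (fun q => mul_nonneg hη (hw q)) (gradient F Θ) (g 0) g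
  have hnorm : ‖d‖ ^ 2 ≤ τ * ∑ q ∈ range τ, (η * w q) ^ 2 * ‖g q‖ ^ 2 := by
    simpa [norm_smul, mul_pow] using norm_sum_sq_le_card_mul_sum_norm_sq (range τ)
      fun q => (η * w q) • g q
  have := mul_le_mul_of_nonneg_left hnorm (by positivity : 0 ≤ L / 2)
  linarith
end
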